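/- For each multi-index n = (n_1,…,n_s) there exists a polynomial Q̃_n ∈ ℂ[X_1,…,X_s] of total degree exactly N_s = n_1 + ⋯ + n_s such that P̃_n(x|q) = Q̃_n(x_1,…,x_s) for all x ∈ [−1,1]^s; that is, the second-system multivariable Askey–Wilson polynomial P̃_n is a polynomial of total degree N_s in the variables x_1,…,x_s. -/

import Mathlib

/-!
With `x = cos θ`, `(1 - z e^{iθ})(1 - z e^{-iθ}) = 1 - 2zx + z²`, so `(A e^{iθ}, A e^{-iθ}; q)_j`
is a polynomial of degree `j` in `x`. In the `k`-th factor of `P̃_n` the parameters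
`a_k e^{±iθ_{k-1}}` enter only through
`(A a_k e^{iθ_{k-1}}, A a_k e^{-iθ_{k-1}}; q)_{n_k} / (…)_j`, a polynomial of degree `n_k - j` in
`x_{k-1}`, so the factor is a polynomial of total degree at most `n_k`. Only its `j = n_k` term
reaches `x_k^{n_k}`, and since all parameters lie in the open unit disc every `q`-shifted factorial
in that coefficient is nonzero. Total degrees add in the domain `ℂ[x_1, …, x_s]`.
-/

open MeasureTheory Classical

noncomputable section

/-- Finite q-shifted factorial `(z;q)_n = ∏_{j=0}^{n-1} (1 - z q^j)`. -/
def qPoch (q z : ℂ) (n : ℕ) : ℂ := ∏ j ∈ Finset.range n, (1 - z * q ^ j)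

/-- Infinite q-shifted factorial `(z;q)_∞ = ∏_{j=0}^{∞} (1 - z q^j)`. -/
def qPochInf (q z : ℂ) : ℂ := ∏' j : ℕ, (1 - z * q ^ j)

/-- `e^{iθ}` where `θ = arccos x ∈ [0,π]`, so that `x = cos θ`. -/
def eAng (x : ℝ) : ℂ := Complex.exp (Complex.I * Real.arccos x)

/-- The Askey–Wilson polynomial `p_n(x; a,b,c,d | q)`
`= a^{-n} (ab,ac,ad;q)_n ∑_{k=0}^n (q^{-n},abcdq^{n-1},ae^{iθ},ae^{-iθ};q)_k q^k / (q,ab,ac,ad;q)_k`. -/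
def awp (q a b c d : ℂ) (n : ℕ) (x : ℝ) : ℂ :=
  a⁻¹ ^ n * (qPoch q (a * b) n * qPoch q (a * c) n * qPoch q (a * d) n) *
    ∑ k ∈ Finset.range (n + 1),
      qPoch q ((q ^ n)⁻¹) k * qPoch q (a * b * c * d * q ^ n * q⁻¹) k *
        qPoch q (a * eAng x) k * qPoch q (a * (eAng x)⁻¹) k * q ^ k /
      (qPoch q q k * qPoch q (a * b) k * qPoch q (a * c) k * qPoch q (a * d) k)

/-- Partial sum `N_{j,k} = n_j + ⋯ + n_k` (empty sum = 0). -/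
def psum (n : ℕ → ℕ) (j k : ℕ) : ℕ := ∑ i ∈ Finset.Icc j k, n i

/-- Partial product `A_{j,k} = a_j ⋯ a_k` (empty product = 1). -/
def pprod (ap : ℕ → ℂ) (j k : ℕ) : ℂ := ∏ i ∈ Finset.Icc j k, ap i

/-- One-based list of variables `x_1,…,x_s` obtained from a point `y ∈ ℝ^s`. -/
def lift (s : ℕ) (y : Fin s → ℝ) (k : ℕ) : ℝ := if h : k - 1 < s then y ⟨k - 1, h⟩ else 0

/-- The second system `P̃_n(x|q)` of multivariable Askey–Wilson polynomials, (2.10). -/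
def mvAW2 (q a b c d : ℂ) (ap : ℕ → ℂ) (s : ℕ) (n : ℕ → ℕ) (x : ℕ → ℝ) : ℂ :=
  awp q (c * pprod ap 2 s * q ^ psum n 2 s) (d * pprod ap 2 s * q ^ psum n 2 s) a b
      (n 1) (x 1) *
    ∏ k ∈ Finset.Icc 2 s,
      awp q (c * pprod ap (k + 1) s * q ^ psum n (k + 1) s)
        (d * pprod ap (k + 1) s * q ^ psum n (k + 1) s)
        (ap k * eAng (x (k - 1))) (ap k * (eAng (x (k - 1)))⁻¹) (n k) (x k)

open Finset

lemma psum_eq_add_psum_succ (n : ℕ → ℕ) {j k : ℕ} (h : j ≤ k) :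
    psum n j k = n j + psum n (j + 1) k := by
  rw [psum, ← insert_Icc_add_one_left_eq_Icc h, sum_insert (by simp), psum]

lemma norm_mul_lt_one {u v : ℂ} (hu : ‖u‖ < 1) (hv : ‖v‖ ≤ 1) : ‖u * v‖ < 1 := by
  rw [norm_mul]
  exact mul_lt_one_of_nonneg_of_lt_one_left (norm_nonneg u) hu hv

lemma prod_Ico_eq_qPoch_div {q z : ℂ} {k n : ℕ} (h : k ≤ n) (hz : qPoch q z k ≠ 0) :
    ∏ j ∈ Ico k n, (1 - z * q ^ j) = qPoch q z n / qPoch q z k := by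
  rw [eq_div_iff hz, mul_comm, qPoch, qPoch, prod_range_mul_prod_Ico _ h]

lemma norm_ofReal_le_one {q : ℝ} (hq0 : 0 ≤ q) (hq1 : q ≤ 1) : ‖(q : ℂ)‖ ≤ 1 := by
  rwa [Complex.norm_of_nonneg hq0]

lemma qPoch_ne_zero {q z : ℂ} {n : ℕ} (h : ∀ j < n, ‖z * q ^ j‖ ≠ 1) : qPoch q z n ≠ 0 :=
  prod_ne_zero_iff.mpr fun j hj h0 => h j (mem_range.mp hj) (by rw [← sub_eq_zero.mp h0, norm_one])

lemma qPoch_ne_zero_of_norm_lt_one {q z : ℂ} (hq : ‖q‖ ≤ 1) (hz : ‖z‖ < 1) (n : ℕ) :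
    qPoch q z n ≠ 0 :=
  qPoch_ne_zero fun j _ =>
    (norm_mul_lt_one hz (by rw [norm_pow]; exact pow_le_one₀ (norm_nonneg q) hq)).ne

lemma qPoch_mul_pow_mul_inv_ne_zero {q z : ℂ} (hq0 : q ≠ 0) (hq : ‖q‖ ≤ 1) (hz : ‖z‖ < 1)
    (n : ℕ) : qPoch q (z * q ^ n * q⁻¹) n ≠ 0 := by
  cases n with
  | zero => simp [qPoch]
  | succ m =>
    rw [pow_succ, mul_assoc z, mul_assoc, mul_inv_cancel₀ hq0, mul_one]
    exact qPoch_ne_zero_of_norm_lt_one hq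
      (norm_mul_lt_one hz (by rw [norm_pow]; exact pow_le_one₀ (norm_nonneg q) hq)) _

lemma qPoch_inv_pow_ne_zero {q : ℝ} (hq0 : 0 < q) (hq1 : q < 1) (n : ℕ) :
    qPoch q (((q : ℂ) ^ n)⁻¹) n ≠ 0 :=
  qPoch_ne_zero fun j hj => by
    rw [norm_mul, norm_inv, norm_pow, norm_pow, Complex.norm_of_nonneg hq0.le, inv_mul_eq_div]
    exact ((one_lt_div (by positivity)).mpr (pow_lt_pow_right_of_lt_one₀ hq0 hq1 hj)).ne'

lemma norm_eAng (x : ℝ) : ‖eAng x‖ = 1 := by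
  rw [eAng, Complex.norm_exp]
  simp

lemma eAng_mul_inv (x : ℝ) : eAng x * (eAng x)⁻¹ = 1 :=
  mul_inv_cancel₀ (Complex.exp_ne_zero _)

lemma eAng_add_inv {x : ℝ} (hx : x ∈ Set.Icc (-1 : ℝ) 1) : eAng x + (eAng x)⁻¹ = 2 * x := by
  have hcos : Complex.cos (Real.arccos x) = x := by
    rw [← Complex.ofReal_cos, Real.cos_arccos hx.1 hx.2]
  rw [eAng, ← Complex.exp_neg, ← hcos, Complex.cos]
  ring_nf

lemma one_sub_mul_eAng_mul_one_sub_mul_eAng_inv {x : ℝ} (hx : x ∈ Set.Icc (-1 : ℝ) 1) (z : ℂ) :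
    (1 - z * eAng x) * (1 - z * (eAng x)⁻¹) = 1 + z ^ 2 - 2 * z * x := by
  linear_combination z ^ 2 * eAng_mul_inv x - z * eAng_add_inv hx

open MvPolynomial

theorem MvPolynomial.totalDegree_prod_of_isDomain {R σ ι : Type*} [CommRing R] [IsDomain R]
    {s : Finset ι} {f : ι → MvPolynomial σ R} (h : ∀ i ∈ s, f i ≠ 0) :
    (∏ i ∈ s, f i).totalDegree = ∑ i ∈ s, (f i).totalDegree := by
  induction s using Finset.induction_on with
  | empty => simp
  | insert i s hi ih =>
    have hs : ∀ j ∈ s, f j ≠ 0 := fun j hj => h j (mem_insert_of_mem hj)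
    rw [prod_insert hi, sum_insert hi, totalDegree_mul_of_isDomain (h i (mem_insert_self i s))
      (prod_ne_zero_iff.mpr hs), ih hs]

section Polynomials

variable {σ : Type*}

/-- `∏_{j ∈ t} (1 - α e^{iθ} q^j)(1 - α e^{-iθ} q^j)` as a polynomial in `X i = cos θ`. -/
def qPairPoly (q α : ℂ) (i : σ) (t : Finset ℕ) : MvPolynomial σ ℂ :=
  ∏ j ∈ t, (C (1 + α ^ 2 * q ^ (2 * j)) - C (2 * α * q ^ j) * X i)

lemma eval_qPairPoly (q α : ℂ) {i : σ} (t : Finset ℕ) {f : σ → ℂ} {x : ℝ}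
    (hx : x ∈ Set.Icc (-1 : ℝ) 1) (hf : f i = x) :
    eval f (qPairPoly q α i t) =
      ∏ j ∈ t, (1 - α * eAng x * q ^ j) * (1 - α * (eAng x)⁻¹ * q ^ j) := by
  rw [qPairPoly, eval_prod]
  refine prod_congr rfl fun j _ => ?_
  simp only [map_sub, eval_C, map_mul, eval_X, hf]
  linear_combination (-1 : ℂ) * one_sub_mul_eAng_mul_one_sub_mul_eAng_inv hx (α * q ^ j)

lemma totalDegree_qPairPoly_le (q α : ℂ) (i : σ) (t : Finset ℕ) :
    (qPairPoly q α i t).totalDegree ≤ #t := by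
  refine (totalDegree_finsetProd _ _).trans ?_
  rw [card_eq_sum_ones]
  refine sum_le_sum fun j _ => (totalDegree_sub _ _).trans (max_le ?_ ?_)
  · exact (totalDegree_C _).trans_le zero_le_one
  · exact (totalDegree_mul _ _).trans (by rw [totalDegree_C, totalDegree_X])

lemma degreeOf_qPairPoly_of_ne (q α : ℂ) {i i' : σ} (h : i' ≠ i) (t : Finset ℕ) :
    (qPairPoly q α i t).degreeOf i' = 0 := by
  refine Nat.eq_zero_of_le_zero ((degreeOf_prod_le _ _ _).trans ?_)
  refine (sum_le_sum fun j _ => (degreeOf_sub_le _ _ _).trans (max_le ?_ ?_)).trans_eq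
    sum_const_zero
  · rw [degreeOf_C]
  · exact (degreeOf_C_mul_le _ _ _).trans (degreeOf_X_of_ne h).le

lemma coeff_qPairPoly_card (q α : ℂ) (i : σ) (t : Finset ℕ) :
    coeff (Finsupp.single i #t) (qPairPoly q α i t) = ∏ j ∈ t, -(2 * α * q ^ j) := by
  induction t using Finset.cons_induction with
  | empty => simp [qPairPoly]
  | cons a t ha ih =>
    have hlow : coeff (Finsupp.single i (#t + 1)) (qPairPoly q α i t) = 0 :=
      coeff_eq_zero_of_totalDegree_lt <| by
        rw [Finsupp.support_single _ (Nat.succ_ne_zero _), sum_singleton,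
          Finsupp.single_eq_same]
        exact Nat.lt_succ_of_le (totalDegree_qPairPoly_le q α i t)
    have hsingle : Finsupp.single i (#t + 1) = Finsupp.single i 1 + Finsupp.single i #t := by
      rw [← Finsupp.single_add, add_comm]
    rw [qPairPoly, prod_cons, ← qPairPoly, card_cons, prod_cons, sub_mul, coeff_sub, coeff_C_mul,
      mul_assoc, coeff_C_mul, hlow, hsingle, coeff_X_mul, ih]
    ring

/-- The `k`-th coefficient of the basic hypergeometric series defining `p_n(x; A, B, c, d | q)`,
with `cd = c * d`, stripped of the factor `(Ac, Ad; q)_k` in its denominator. -/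
def awCoeff (q A B cd : ℂ) (n k : ℕ) : ℂ :=
  qPoch q ((q ^ n)⁻¹) k * qPoch q (A * B * cd * q ^ n * q⁻¹) k * q ^ k /
    (qPoch q q k * qPoch q (A * B) k)

lemma awCoeff_self_ne_zero {q : ℝ} (hq0 : 0 < q) (hq1 : q < 1) {A B cd : ℂ}
    (hAB : ‖A * B‖ < 1) (hABcd : ‖A * B * cd‖ < 1) (n : ℕ) : awCoeff q A B cd n n ≠ 0 := by
  have hq : ‖(q : ℂ)‖ ≤ 1 := norm_ofReal_le_one hq0.le hq1.le
  have hq0' : (q : ℂ) ≠ 0 := Complex.ofReal_ne_zero.mpr hq0.ne'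
  refine div_ne_zero (mul_ne_zero (mul_ne_zero ?_ ?_) (pow_ne_zero _ hq0'))
    (mul_ne_zero ?_ (qPoch_ne_zero_of_norm_lt_one hq hAB n))
  · exact qPoch_inv_pow_ne_zero hq0 hq1 n
  · exact qPoch_mul_pow_mul_inv_ne_zero hq0' hq hABcd n
  · refine qPoch_ne_zero_of_norm_lt_one hq ?_ n
    rwa [Complex.norm_of_nonneg hq0.le]

/-- `p_n(X i; A, B, c, d | q)` with `cd = c * d`, where `S k` is a polynomial standing for
`(Ac, Ad; q)_n / (Ac, Ad; q)_k`. -/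
def awPoly (q A B cd : ℂ) (n : ℕ) (S : ℕ → MvPolynomial σ ℂ) (i : σ) : MvPolynomial σ ℂ :=
  C (A⁻¹ ^ n * qPoch q (A * B) n) *
    ∑ k ∈ range (n + 1), C (awCoeff q A B cd n k) * (S k * qPairPoly q A i (range k))

lemma eval_awPoly (q A B : ℂ) {c d cd : ℂ} (hcd : c * d = cd) (n : ℕ)
    {S : ℕ → MvPolynomial σ ℂ} {i : σ} {f : σ → ℂ} {x : ℝ}
    (hx : x ∈ Set.Icc (-1 : ℝ) 1) (hf : f i = x)
    (hS : ∀ k ≤ n, eval f (S k) =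
      qPoch q (A * c) n * qPoch q (A * d) n / (qPoch q (A * c) k * qPoch q (A * d) k)) :
    eval f (awPoly q A B cd n S i) = awp q A B c d n x := by
  rw [awPoly, awp, eval_mul, eval_C, map_sum, mul_sum, mul_sum]
  refine sum_congr rfl fun k hk => ?_
  rw [eval_mul, eval_mul, eval_C, hS k (Nat.lt_succ_iff.mp (mem_range.mp hk)),
    eval_qPairPoly q A _ hx hf, prod_mul_distrib, awCoeff, ← hcd, ← mul_assoc (A * B)]
  simp only [← qPoch.eq_1]
  -- no factorial needs to be nonzero: `(u * v)⁻¹ = u⁻¹ * v⁻¹` holds in `ℂ` even when one is `0`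
  ring

lemma totalDegree_awPoly_le (q A B cd : ℂ) (n : ℕ) {S : ℕ → MvPolynomial σ ℂ} (i : σ)
    (hS : ∀ k ≤ n, (S k).totalDegree ≤ n - k) :
    (awPoly q A B cd n S i).totalDegree ≤ n := by
  refine (totalDegree_mul _ _).trans ?_
  rw [totalDegree_C, zero_add]
  refine (totalDegree_finsetSum _ _).trans (Finset.sup_le fun k hk => ?_)
  have hkn := Nat.lt_succ_iff.mp (mem_range.mp hk)
  refine (totalDegree_mul _ _).trans ?_
  rw [totalDegree_C, zero_add]
  have := (totalDegree_mul _ _).trans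
    (add_le_add (hS k hkn) ((totalDegree_qPairPoly_le q A i (range k)).trans_eq (card_range k)))
  omega

lemma coeff_awPoly_single (q A B cd : ℂ) (n : ℕ) {S : ℕ → MvPolynomial σ ℂ} (i : σ)
    (hSn : S n = 1) (hS : ∀ k < n, (S k).degreeOf i = 0) :
    coeff (Finsupp.single i n) (awPoly q A B cd n S i) =
      A⁻¹ ^ n * qPoch q (A * B) n * awCoeff q A B cd n n * ∏ j ∈ range n, -(2 * A * q ^ j) := by
  have htop := coeff_qPairPoly_card q A i (range n)
  rw [card_range] at htop
  rw [awPoly, coeff_C_mul, coeff_sum, sum_range_succ, coeff_C_mul, hSn, one_mul, htop,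
    sum_eq_zero, zero_add]
  · ring
  intro k hk
  have hkn := mem_range.mp hk
  have hdeg : (S k * qPairPoly q A i (range k)).degreeOf i < n :=
    calc _ ≤ (S k).degreeOf i + (qPairPoly q A i (range k)).degreeOf i := degreeOf_mul_le _ _ _
      _ ≤ 0 + k := add_le_add (hS k hkn).le <|
          (degreeOf_le_totalDegree _ _).trans <|
            (totalDegree_qPairPoly_le q A i _).trans_eq (card_range k)
      _ < n := by omega
  have hcoeff : coeff (Finsupp.single i n) (S k * qPairPoly q A i (range k)) = 0 :=
    notMem_support_iff.mp fun hmem => by simpa using (degreeOf_lt_iff (by omega)).mp hdeg _ hmem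
  rw [coeff_C_mul, hcoeff, mul_zero]

lemma awPoly_ne_zero_and_totalDegree_eq {q : ℝ} (hq0 : 0 < q) (hq1 : q < 1) {A B cd : ℂ}
    (hA0 : A ≠ 0) (hAB : ‖A * B‖ < 1) (hABcd : ‖A * B * cd‖ < 1) (n : ℕ)
    {S : ℕ → MvPolynomial σ ℂ} (i : σ) (hSdeg : ∀ k ≤ n, (S k).totalDegree ≤ n - k)
    (hSn : S n = 1) (hSi : ∀ k < n, (S k).degreeOf i = 0) :
    awPoly q A B cd n S i ≠ 0 ∧ (awPoly q A B cd n S i).totalDegree = n := by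
  have hq0' : (q : ℂ) ≠ 0 := Complex.ofReal_ne_zero.mpr hq0.ne'
  have hcoeff : coeff (Finsupp.single i n) (awPoly q A B cd n S i) ≠ 0 := by
    rw [coeff_awPoly_single _ _ _ _ _ _ hSn hSi]
    refine mul_ne_zero (mul_ne_zero (mul_ne_zero (pow_ne_zero _ (inv_ne_zero hA0)) ?_) ?_) ?_
    · exact qPoch_ne_zero_of_norm_lt_one (norm_ofReal_le_one hq0.le hq1.le) hAB n
    · exact awCoeff_self_ne_zero hq0 hq1 hAB hABcd n
    · exact prod_ne_zero_iff.mpr fun j _ =>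
        neg_ne_zero.mpr (mul_ne_zero (mul_ne_zero two_ne_zero hA0) (pow_ne_zero _ hq0'))
  refine ⟨ne_zero_iff.mpr ⟨_, hcoeff⟩, le_antisymm (totalDegree_awPoly_le _ _ _ _ _ _ hSdeg) ?_⟩
  simpa using le_totalDegree (mem_support_iff.mpr hcoeff)

/-- `p_n(X i; A, B, a, b | q)`. -/
def awPolyFirst (q A B a b : ℂ) (n : ℕ) (i : σ) : MvPolynomial σ ℂ :=
  awPoly q A B (a * b) n
    (fun k => C (qPoch q (A * a) n * qPoch q (A * b) n / (qPoch q (A * a) k * qPoch q (A * b) k)))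
    i

/-- `p_n(X ic; A, B, α e^{iθ}, α e^{-iθ} | q)` where `X ip = cos θ`. -/
def awPolyLinked (q A B α : ℂ) (n : ℕ) (ip ic : σ) : MvPolynomial σ ℂ :=
  awPoly q A B (α ^ 2) n (fun k => qPairPoly q (A * α) ip (Ico k n)) ic

lemma eval_awPolyFirst (q A B a b : ℂ) (n : ℕ) {i : σ} {f : σ → ℂ} {x : ℝ}
    (hx : x ∈ Set.Icc (-1 : ℝ) 1) (hf : f i = x) :
    eval f (awPolyFirst q A B a b n i) = awp q A B a b n x :=
  eval_awPoly q A B rfl n hx hf fun _ _ => eval_C _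

lemma eval_awPolyLinked {q : ℂ} (hq : ‖q‖ ≤ 1) {A : ℂ} (B : ℂ) {α : ℂ}
    (hA : ‖A‖ < 1) (hα : ‖α‖ ≤ 1) (n : ℕ) {ip ic : σ} {f : σ → ℂ} {xp xc : ℝ}
    (hxp : xp ∈ Set.Icc (-1 : ℝ) 1) (hxc : xc ∈ Set.Icc (-1 : ℝ) 1) (hfp : f ip = xp)
    (hfc : f ic = xc) :
    eval f (awPolyLinked q A B α n ip ic) =
      awp q A B (α * eAng xp) (α * (eAng xp)⁻¹) n xc := by
  refine eval_awPoly q A B ?_ n hxc hfc fun k hk => ?_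
  · linear_combination α ^ 2 * eAng_mul_inv xp
  have hne : ∀ w : ℂ, ‖w‖ = 1 → qPoch q (A * (α * w)) k ≠ 0 := fun w hw =>
    qPoch_ne_zero_of_norm_lt_one hq (norm_mul_lt_one hA (by rwa [norm_mul, hw, mul_one])) k
  rw [eval_qPairPoly _ _ _ hxp hfp, prod_mul_distrib]
  simp only [mul_assoc A α]
  rw [prod_Ico_eq_qPoch_div hk (hne _ (norm_eAng xp)),
    prod_Ico_eq_qPoch_div hk (hne _ (by rw [norm_inv, norm_eAng, inv_one])), div_mul_div_comm]

lemma awPolyFirst_ne_zero_and_totalDegree_eq {q : ℝ} (hq0 : 0 < q) (hq1 : q < 1) {A B a b : ℂ}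
    (hA0 : A ≠ 0) (hA : ‖A‖ < 1) (hB : ‖B‖ ≤ 1) (ha : ‖a‖ ≤ 1) (hb : ‖b‖ ≤ 1) (n : ℕ) (i : σ) :
    awPolyFirst q A B a b n i ≠ 0 ∧ (awPolyFirst q A B a b n i).totalDegree = n := by
  have hq := norm_ofReal_le_one hq0.le hq1.le
  have hAB := norm_mul_lt_one hA hB
  refine awPoly_ne_zero_and_totalDegree_eq hq0 hq1 hA0 hAB
    (norm_mul_lt_one hAB (by rw [norm_mul]; exact mul_le_one₀ ha (norm_nonneg b) hb)) n i
    (fun _ _ => (totalDegree_C _).trans_le (Nat.zero_le _)) ?_ (fun _ _ => degreeOf_C _ _)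
  rw [div_self (mul_ne_zero (qPoch_ne_zero_of_norm_lt_one hq (norm_mul_lt_one hA ha) n)
    (qPoch_ne_zero_of_norm_lt_one hq (norm_mul_lt_one hA hb) n)), C_1]

lemma awPolyLinked_ne_zero_and_totalDegree_eq {q : ℝ} (hq0 : 0 < q) (hq1 : q < 1) {A B α : ℂ}
    (hA0 : A ≠ 0) (hA : ‖A‖ < 1) (hB : ‖B‖ ≤ 1) (hα : ‖α‖ ≤ 1) (n : ℕ) {ip ic : σ}
    (hne : ip ≠ ic) :
    awPolyLinked q A B α n ip ic ≠ 0 ∧ (awPolyLinked q A B α n ip ic).totalDegree = n := by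
  have hAB := norm_mul_lt_one hA hB
  refine awPoly_ne_zero_and_totalDegree_eq hq0 hq1 hA0 hAB
    (norm_mul_lt_one hAB (by rw [norm_pow]; exact pow_le_one₀ (norm_nonneg α) hα)) n ic
    (fun k _ => (totalDegree_qPairPoly_le _ _ _ _).trans_eq (Nat.card_Ico k n)) ?_
    (fun k _ => degreeOf_qPairPoly_of_ne _ _ hne.symm _)
  rw [Ico_self, qPairPoly, prod_empty]

end Polynomials

lemma norm_mul_pprod_mul_pow_lt_one {q : ℂ} (hq : ‖q‖ ≤ 1) {e : ℂ} (he : ‖e‖ < 1) {ap : ℕ → ℂ}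
    {s : ℕ} (hap1 : ∀ k, 2 ≤ k → k ≤ s → ‖ap k‖ < 1) {j : ℕ} (hj : 2 ≤ j) (m : ℕ) :
    ‖e * pprod ap j s * q ^ m‖ < 1 := by
  refine norm_mul_lt_one (norm_mul_lt_one he ?_) ?_
  · rw [pprod, norm_prod]
    exact prod_le_one (fun _ _ => norm_nonneg _) fun k hk =>
      (hap1 k (hj.trans (mem_Icc.mp hk).1) (mem_Icc.mp hk).2).le
  · rw [norm_pow]
    exact pow_le_one₀ (norm_nonneg _) hq

lemma mul_pprod_mul_pow_ne_zero {q : ℂ} (hq0 : q ≠ 0) {e : ℂ} (he : e ≠ 0) {ap : ℕ → ℂ} {s : ℕ}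
    (hap0 : ∀ k, 2 ≤ k → k ≤ s → ap k ≠ 0) {j : ℕ} (hj : 2 ≤ j) (m : ℕ) :
    e * pprod ap j s * q ^ m ≠ 0 :=
  mul_ne_zero (mul_ne_zero he (prod_ne_zero_iff.mpr fun k hk =>
    hap0 k (hj.trans (mem_Icc.mp hk).1) (mem_Icc.mp hk).2)) (pow_ne_zero _ hq0)

section Assembly

variable {q : ℝ} {ap : ℕ → ℂ} {s : ℕ}

/-- The variable `x_k` (`1 ≤ k ≤ s`) is `X (k - 1)`; the index is clamped outside that range. -/
def coordIdx (s : ℕ) (hs : 1 ≤ s) (k : ℕ) : Fin s := ⟨min (k - 1) (s - 1), by omega⟩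

lemma coordIdx_val (hs : 1 ≤ s) {k : ℕ} (hk : k ∈ Icc 1 s) : (coordIdx s hs k : ℕ) = k - 1 := by
  simp only [coordIdx]
  grind

lemma coordIdx_pred_ne (hs : 1 ≤ s) {k : ℕ} (hk : k ∈ Icc 2 s) :
    coordIdx s hs (k - 1) ≠ coordIdx s hs k := by
  simp only [coordIdx, ne_eq, Fin.mk.injEq]
  grind

/-- The polynomial `Q̃_n`. -/
def mvAW2Poly (q a b c d : ℂ) (ap : ℕ → ℂ) (s : ℕ) (hs : 1 ≤ s) (n : ℕ → ℕ) :
    MvPolynomial (Fin s) ℂ :=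
  awPolyFirst q (c * pprod ap 2 s * q ^ psum n 2 s) (d * pprod ap 2 s * q ^ psum n 2 s) a b
      (n 1) (coordIdx s hs 1) *
    ∏ k ∈ Icc 2 s,
      awPolyLinked q (c * pprod ap (k + 1) s * q ^ psum n (k + 1) s)
        (d * pprod ap (k + 1) s * q ^ psum n (k + 1) s) (ap k) (n k)
        (coordIdx s hs (k - 1)) (coordIdx s hs k)

lemma eval_mvAW2Poly (hq0 : 0 < q) (hq1 : q < 1) (hs : 1 ≤ s) {a b c d : ℂ} (hc1 : ‖c‖ < 1)
    (hap1 : ∀ k, 2 ≤ k → k ≤ s → ‖ap k‖ < 1) (n : ℕ → ℕ) {x : ℕ → ℝ}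
    (hx : ∀ k ∈ Icc 1 s, x k ∈ Set.Icc (-1 : ℝ) 1) :
    eval (fun i : Fin s => ((x ((i : ℕ) + 1) : ℝ) : ℂ)) (mvAW2Poly q a b c d ap s hs n) =
      mvAW2 q a b c d ap s n x := by
  have hvar : ∀ k ∈ Icc 1 s, ((x ((coordIdx s hs k : ℕ) + 1) : ℝ) : ℂ) = x k := fun k hk => by
    rw [coordIdx_val hs hk, Nat.sub_add_cancel (mem_Icc.mp hk).1]
  rw [mvAW2Poly, mvAW2, map_mul, eval_prod]
  have h1 : 1 ∈ Icc 1 s := mem_Icc.mpr ⟨le_rfl, hs⟩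
  congr 1
  · exact eval_awPolyFirst _ _ _ _ _ _ (hx 1 h1) (hvar 1 h1)
  refine prod_congr rfl fun k hk => ?_
  obtain ⟨hk2, hks⟩ := mem_Icc.mp hk
  have hpred : k - 1 ∈ Icc 1 s := mem_Icc.mpr ⟨by omega, by omega⟩
  have hk1 : k ∈ Icc 1 s := mem_Icc.mpr ⟨by omega, hks⟩
  have hq := norm_ofReal_le_one hq0.le hq1.le
  exact eval_awPolyLinked hq _ (norm_mul_pprod_mul_pow_lt_one hq hc1 hap1 (by omega) _)
    (hap1 k hk2 hks).le _ (hx _ hpred) (hx k hk1) (hvar _ hpred) (hvar k hk1)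

lemma totalDegree_mvAW2Poly (hq0 : 0 < q) (hq1 : q < 1) (hs : 1 ≤ s) {a b c d : ℂ}
    (hc0 : c ≠ 0) (hap0 : ∀ k, 2 ≤ k → k ≤ s → ap k ≠ 0) (ha1 : ‖a‖ < 1) (hb1 : ‖b‖ < 1)
    (hc1 : ‖c‖ < 1) (hd1 : ‖d‖ < 1) (hap1 : ∀ k, 2 ≤ k → k ≤ s → ‖ap k‖ < 1) (n : ℕ → ℕ) :
    (mvAW2Poly q a b c d ap s hs n).totalDegree = psum n 1 s := by
  have hq := norm_ofReal_le_one hq0.le hq1.le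
  have hA0 {j} (hj : 2 ≤ j) :=
    mul_pprod_mul_pow_ne_zero (Complex.ofReal_ne_zero.mpr hq0.ne') hc0 hap0 hj (psum n j s)
  have hA {j} (hj : 2 ≤ j) := norm_mul_pprod_mul_pow_lt_one hq hc1 hap1 hj (psum n j s)
  have hB {j} (hj : 2 ≤ j) := norm_mul_pprod_mul_pow_lt_one hq hd1 hap1 hj (psum n j s)
  have hfirst := awPolyFirst_ne_zero_and_totalDegree_eq hq0 hq1 (hA0 le_rfl) (hA le_rfl)
    (hB le_rfl).le ha1.le hb1.le (n 1) (coordIdx s hs 1)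
  have hlinked {k} (hk : k ∈ Icc 2 s) :=
    have hk1 : 2 ≤ k + 1 := by grind
    awPolyLinked_ne_zero_and_totalDegree_eq hq0 hq1 (hA0 hk1) (hA hk1) (hB hk1).le
      (hap1 k (mem_Icc.mp hk).1 (mem_Icc.mp hk).2).le (n k) (coordIdx_pred_ne hs hk)
  rw [mvAW2Poly, totalDegree_mul_of_isDomain hfirst.1 (prod_ne_zero_iff.mpr fun k hk =>
      (hlinked hk).1), totalDegree_prod_of_isDomain fun k hk => (hlinked hk).1,
    hfirst.2, sum_congr rfl fun k hk => (hlinked hk).2, psum_eq_add_psum_succ n hs]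
  rfl

end Assembly

theorem mvAskeyWilson_second_isPolynomial_of_totalDegree_general (q : ℝ) (hq0 : 0 < q) (hq1 : q < 1)
    (s : ℕ) (hs : 1 ≤ s) (a b c d : ℂ) (ap : ℕ → ℂ)
    (hc0 : c ≠ 0)
    (hap0 : ∀ k, 2 ≤ k → k ≤ s → ap k ≠ 0)
    (ha1 : ‖a‖ < 1) (hb1 : ‖b‖ < 1)
    (hc1 : ‖c‖ < 1) (hd1 : ‖d‖ < 1)
    (hap1 : ∀ k, 2 ≤ k → k ≤ s → ‖ap k‖ < 1)
    (n : ℕ → ℕ) :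
    ∃ Q : MvPolynomial (Fin s) ℂ,
      Q.totalDegree = psum n 1 s ∧
        ∀ x : ℕ → ℝ, (∀ k ∈ Finset.Icc 1 s, x k ∈ Set.Icc (-1 : ℝ) 1) →
          mvAW2 q a b c d ap s n x =
            MvPolynomial.eval (fun i : Fin s => ((x ((i : ℕ) + 1) : ℝ) : ℂ)) Q :=
  ⟨mvAW2Poly q a b c d ap s hs n,
    totalDegree_mvAW2Poly hq0 hq1 hs hc0 hap0 ha1 hb1 hc1 hd1 hap1 n,
    fun _ hx => (eval_mvAW2Poly hq0 hq1 hs hc1 hap1 n hx).symm⟩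

/-- `P̃_n(x|q)` is a polynomial of total degree exactly `N_s = n_1 + ⋯ + n_s`
in the variables `x_1, …, x_s`. -/
theorem mvAskeyWilson_second_isPolynomial_of_totalDegree (q : ℝ) (hq0 : 0 < q) (hq1 : q < 1)
    (s : ℕ) (hs : 1 ≤ s) (a b c d : ℂ) (ap : ℕ → ℂ)
    (ha0 : a ≠ 0) (hb0 : b ≠ 0) (hc0 : c ≠ 0) (hd0 : d ≠ 0)
    (hap0 : ∀ k, 2 ≤ k → k ≤ s → ap k ≠ 0)
    (ha1 : ‖a‖ < 1) (hb1 : ‖b‖ < 1)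
    (hc1 : ‖c‖ < 1) (hd1 : ‖d‖ < 1)
    (hap1 : ∀ k, 2 ≤ k → k ≤ s → ‖ap k‖ < 1)
    (n : ℕ → ℕ) :
    ∃ Q : MvPolynomial (Fin s) ℂ,
      Q.totalDegree = psum n 1 s ∧
        ∀ x : ℕ → ℝ, (∀ k ∈ Finset.Icc 1 s, x k ∈ Set.Icc (-1 : ℝ) 1) →
          mvAW2 q a b c d ap s n x =
            MvPolynomial.eval (fun i : Fin s => ((x ((i : ℕ) + 1) : ℝ) : ℂ)) Q :=
  mvAskeyWilson_second_isPolynomial_of_totalDegree_general q hq0 hq1 s hs a b c d ap hc0 hap0 ha1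
    hb1 hc1 hd1 hap1 n
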